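/- arXiv:1403.3769 — 9 statements merged into one kernel-verified Lean document; each statement's English description precedes it below -/
import Mathlib

section
/- Let G be an AG-group with left identity e and let μ be a fuzzy AG-subgroup of G. Then μ(x·y) = μ(y·x) for all x, y ∈ G. -/
/-- An AG-group: a groupoid satisfying the left invertive law, with a left
identity `e` and two-sided inverses. -/
class AGGroup (G : Type*) where
  mul : G → G → G
  e : G
  inv : G → G
  left_invertive : ∀ a b c : G, mul (mul a b) c = mul (mul c b) a
  left_id : ∀ a : G, mul e a = a
  inv_mul : ∀ a : G, mul (inv a) a = e
  mul_inv : ∀ a : G, mul a (inv a) = e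

namespace AGGroup

variable {G : Type*} [AGGroup G]

/-- A fuzzy AG-subgroup: a fuzzy subset (a map into `[0,1]`) with
`μ(xy) ≥ min (μ x) (μ y)` and `μ x⁻¹ ≥ μ x`. -/
def IsFuzzyAGSubgroup (μ : G → ℝ) : Prop :=
  (∀ x : G, μ x ∈ Set.Icc (0 : ℝ) 1) ∧
  (∀ x y : G, μ (mul x y) ≥ min (μ x) (μ y)) ∧
  (∀ x : G, μ (inv x) ≥ μ x)

/-- A normal fuzzy AG-subgroup: a fuzzy AG-subgroup with `μ((xy)x⁻¹) = μ y`. -/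
def IsNormalFuzzyAGSubgroup (μ : G → ℝ) : Prop :=
  IsFuzzyAGSubgroup μ ∧ ∀ x y : G, μ (mul (mul x y) (inv x)) = μ y

/-- The fuzzy coset `μ_x`, given by `μ_x g = μ (g x⁻¹)`. -/
def fuzzyCoset (μ : G → ℝ) (x : G) : G → ℝ :=
  fun g => μ (mul g (inv x))

/-- The level set `μ* = {a : μ a = μ e}` of a fuzzy AG-subgroup. -/
def levelSet (μ : G → ℝ) : Set G := {a : G | μ a = μ e}

/-- The right coset `S x = {s x : s ∈ S}` of a subset `S`. -/
def rightCoset (S : Set G) (x : G) : Set G := (fun s => mul s x) '' S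

/-- An AG-subgroup: a nonempty subset closed under the operation and inverses. -/
def IsAGSubgroup (H : Set G) : Prop :=
  H.Nonempty ∧ (∀ a ∈ H, ∀ b ∈ H, mul a b ∈ H) ∧ (∀ a ∈ H, inv a ∈ H)

end AGGroup

open AGGroup

/-- For a fuzzy AG-subgroup `μ` of an AG-group `G`,
`μ (x·y) = μ (y·x)` for all `x, y`. -/
theorem fuzzy_agsubgroup_comm {G : Type*} [AGGroup G] (μ : G → ℝ)
    (hμ : IsFuzzyAGSubgroup μ) (x y : G) :
    μ (mul x y) = μ (mul y x) := by
  obtain ⟨-, hmul, hinv⟩ := hμ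
  have he : ∀ a : G, μ (e : G) ≥ μ a := by
    intro a
    have := hmul (inv a) a
    rw [AGGroup.inv_mul] at this
    exact le_trans (le_min (hinv a) le_rfl) this
  have key : ∀ a b : G, μ (mul b a) ≥ μ (mul a b) := by
    intro a b
    have h1 : mul b a = mul (mul a b) (e : G) := by
      have := AGGroup.left_invertive (e : G) b a
      rw [AGGroup.left_id] at this
      exact this
    rw [h1]
    exact le_trans (le_min le_rfl (he _)) (hmul _ _)
  exact le_antisymm (key x y) (key y x)
end

section
/- Let G and G' be AG-groups, let f : G → G' be a surjective homomorphism, and let μ be a normal fuzzy AG-subgroup of G'. Then the composite μ∘f is a normal fuzzy AG-subgroup of G. -/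
open AGGroup

/-- The pullback of a normal fuzzy AG-subgroup along a
surjective homomorphism of AG-groups is a normal fuzzy AG-subgroup. -/
theorem comp_hom_normalFuzzy {G G' : Type*} [AGGroup G] [AGGroup G']
    (f : G → G') (hsurj : Function.Surjective f)
    (hhom : ∀ x y : G, f (mul x y) = mul (f x) (f y))
    (μ : G' → ℝ) (hμ : IsNormalFuzzyAGSubgroup μ) :
    IsNormalFuzzyAGSubgroup (μ ∘ f) := by
  -- f e is a left identity of G'
  have hleft : ∀ b : G', mul (f (e : G)) b = b := by
    intro b
    obtain ⟨a, rfl⟩ := hsurj b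
    rw [← hhom, left_id]
  -- hence f e = e
  have hfe : f (e : G) = (e : G') := by
    have h1 : mul (f (e : G)) (inv (f (e : G))) = inv (f (e : G)) :=
      hleft _
    have h2 : inv (f (e : G)) = (e : G') := by
      rw [← h1, AGGroup.mul_inv]
    have := inv_mul (f (e : G))
    rw [h2, left_id] at this
    exact this
  -- f (inv x) = inv (f x) by uniqueness of inverses
  have hfinv : ∀ x : G, f (inv x) = inv (f x) := by
    intro x
    have hba : mul (f (inv x)) (f x) = (e : G') := by
      rw [← hhom, inv_mul, hfe]
    calc f (inv x) = mul (e : G') (f (inv x)) := (left_id _).symm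
      _ = mul (mul (inv (f x)) (f x)) (f (inv x)) := by rw [inv_mul]
      _ = mul (mul (f (inv x)) (f x)) (inv (f x)) := by
            rw [left_invertive]
      _ = mul (e : G') (inv (f x)) := by rw [hba]
      _ = inv (f x) := left_id _
  obtain ⟨⟨hIcc, hmul, hinv⟩, hnorm⟩ := hμ
  refine ⟨⟨fun x => hIcc (f x), fun x y => ?_, fun x => ?_⟩, fun x y => ?_⟩
  · simp only [Function.comp_apply, hhom]
    exact hmul (f x) (f y)
  · simp only [Function.comp_apply, hfinv]
    exact hinv (f x)
  · simp only [Function.comp_apply, hhom, hfinv]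
    exact hnorm (f x) (f y)
end

section
/- Let G be an AG-group and μ a normal fuzzy AG-subgroup of G. If x, y, x', y' ∈ G satisfy μ_x = μ_{x'} and μ_y = μ_{y'} (as functions on G), then μ_{x·y} = μ_{x'·y'}; that is, the operation μ_x ∘ μ_y = μ_{x·y} on fuzzy cosets is well defined. -/
open AGGroup

section Aux

variable {G : Type*} [AGGroup G]

private lemma medial (a b c d : G) :
    mul (mul a b) (mul c d) = mul (mul a c) (mul b d) := by
  rw [left_invertive a b (mul c d), left_invertive c d b, left_invertive (mul b d) c a]

private lemma agss (a b c : G) : mul a (mul b c) = mul b (mul a c) := by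
  have h := medial e a b c
  simpa [left_id] using h

private lemma paramedial (a b c d : G) :
    mul (mul a b) (mul c d) = mul (mul d b) (mul c a) := by
  rw [agss (mul a b) c d, left_invertive a b d, agss c (mul d b) a]

private lemma mul_mul_inv (b a : G) : mul (mul b a) (inv a) = b := by
  rw [left_invertive, inv_mul, left_id]

private lemma left_inv_unique {u a : G} (h : mul u a = e) : u = inv a := by
  have h2 := mul_mul_inv u a
  rw [h, left_id] at h2
  exact h2.symm

private lemma inv_e' : (inv e : G) = e := (left_inv_unique (left_id (G := G) e)).symm

private lemma inv_invol (a : G) : inv (inv a) = a :=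
  (left_inv_unique (AGGroup.mul_inv a)).symm

private lemma inv_mul_eq_s2 (a b : G) : inv (mul a b) = mul (inv a) (inv b) := by
  refine (left_inv_unique ?_).symm
  rw [medial, inv_mul, inv_mul, left_id]

private lemma mu_le_e {μ : G → ℝ} (hμ : IsNormalFuzzyAGSubgroup μ) (t : G) :
    μ t ≤ μ e := by
  have h := hμ.1.2.1 t (inv t)
  rw [AGGroup.mul_inv] at h
  have h2 := hμ.1.2.2 t
  exact le_trans (le_min le_rfl h2) h

private lemma mu_mul_e {μ : G → ℝ} (hμ : IsNormalFuzzyAGSubgroup μ) (t : G) :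
    μ (mul t e) = μ t := by
  have h := hμ.2 e t
  rwa [left_id, inv_e'] at h

private lemma mu_comm {μ : G → ℝ} (hμ : IsNormalFuzzyAGSubgroup μ) (a b : G) :
    μ (mul a b) = μ (mul b a) := by
  have h : mul (mul a b) e = mul b a := by
    rw [left_invertive, left_id]
  rw [← mu_mul_e hμ (mul a b), h]

/-- If `μ (u v⁻¹) = μ e` then `μ (g v⁻¹) ≥ μ (g u⁻¹)` for every `g`. -/
private lemma coset_le {μ : G → ℝ} (hμ : IsNormalFuzzyAGSubgroup μ) {u v : G}
    (h : μ (mul u (inv v)) = μ e) (g : G) :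
    μ (mul g (inv v)) ≥ μ (mul g (inv u)) := by
  have key : mul (mul u (inv v)) (mul (inv u) g) = mul (mul g (inv v)) e := by
    rw [paramedial, inv_mul]
  have h1 := hμ.1.2.1 (mul u (inv v)) (mul (inv u) g)
  rw [key, mu_mul_e hμ, h, mu_comm hμ (inv u) g] at h1
  exact le_trans (le_min (mu_le_e hμ _) le_rfl) h1

end Aux

/-- the operation `μ_x ∘ μ_y = μ_{x·y}` on fuzzy cosets of a
normal fuzzy AG-subgroup is well defined. -/
theorem fuzzyCoset_mul_wellDefined {G : Type*} [AGGroup G] (μ : G → ℝ)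
    (hμ : IsNormalFuzzyAGSubgroup μ) (x y x' y' : G)
    (hx : fuzzyCoset μ x = fuzzyCoset μ x')
    (hy : fuzzyCoset μ y = fuzzyCoset μ y') :
    fuzzyCoset μ (mul x y) = fuzzyCoset μ (mul x' y') := by
  -- extract the level-set conditions from the coset equalities
  have hx1 : μ (mul x (inv x')) = μ e := by
    have := congrFun hx x
    simpa [fuzzyCoset, AGGroup.mul_inv] using this.symm
  have hx2 : μ (mul x' (inv x)) = μ e := by
    have := congrFun hx x'
    simpa [fuzzyCoset, AGGroup.mul_inv] using this
  have hy1 : μ (mul y (inv y')) = μ e := by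
    have := congrFun hy y
    simpa [fuzzyCoset, AGGroup.mul_inv] using this.symm
  have hy2 : μ (mul y' (inv y)) = μ e := by
    have := congrFun hy y'
    simpa [fuzzyCoset, AGGroup.mul_inv] using this
  -- μ((xy)(x'y')⁻¹) = μ e
  have key : ∀ a b a' b' : G, μ (mul a (inv a')) = μ e → μ (mul b (inv b')) = μ e →
      μ (mul (mul a b) (inv (mul a' b'))) = μ e := by
    intro a b a' b' ha hb
    have hrw : mul (mul a b) (inv (mul a' b'))
        = mul (mul a (inv a')) (mul b (inv b')) := by
      rw [inv_mul_eq_s2, medial]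
    have h1 := hμ.1.2.1 (mul a (inv a')) (mul b (inv b'))
    rw [← hrw, ha, hb, min_self] at h1
    exact le_antisymm (mu_le_e hμ _) h1
  have h1 : μ (mul (mul x y) (inv (mul x' y'))) = μ e := key x y x' y' hx1 hy1
  have h2 : μ (mul (mul x' y') (inv (mul x y))) = μ e := key x' y' x y hx2 hy2
  funext g
  exact le_antisymm (coset_le hμ h1 g) (coset_le hμ h2 g)
end

section
/- Let G be an AG-group with left identity e and μ a fuzzy AG-subgroup of G. If x, y ∈ G satisfy μ_x = μ_y (as functions on G), then μ(y·x⁻¹) = μ(e) and μ(x·y⁻¹) = μ(e); that is, y·x⁻¹ ∈ μ* and x·y⁻¹ ∈ μ*. -/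
open AGGroup

/-- if `μ_x = μ_y` then `μ(y·x⁻¹) = μ e` and `μ(x·y⁻¹) = μ e`,
i.e. `y·x⁻¹ ∈ μ*` and `x·y⁻¹ ∈ μ*`. -/
theorem fuzzyCoset_eq_mem_levelSet {G : Type*} [AGGroup G] (μ : G → ℝ)
    (hμ : IsFuzzyAGSubgroup μ) (x y : G)
    (h : fuzzyCoset μ x = fuzzyCoset μ y) :
    μ (mul y (inv x)) = μ (e : G) ∧ μ (mul x (inv y)) = μ (e : G) := by
  have h1 := congrFun h y
  have h2 := congrFun h x
  simp only [fuzzyCoset, AGGroup.mul_inv] at h1 h2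
  exact ⟨by rw [h1], by rw [← h2]⟩
end

section
/- Let G be an AG-group and μ a normal fuzzy AG-subgroup of G. If x, y ∈ G satisfy μ_x = μ_y (as functions on G), then μ(x) = μ(y). -/
open AGGroup

/-- for a normal fuzzy AG-subgroup, `μ_x = μ_y` implies
`μ x = μ y`. -/
theorem fuzzyCoset_eq_imp_eq {G : Type*} [AGGroup G] (μ : G → ℝ)
    (hμ : IsNormalFuzzyAGSubgroup μ) (x y : G)
    (h : fuzzyCoset μ x = fuzzyCoset μ y) :
    μ x = μ y := by
  obtain ⟨⟨_, hmul, hinv⟩, _⟩ := hμ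
  have he : ∀ a : G, μ e ≥ μ a := by
    intro a
    have := hmul a (inv a)
    rw [AGGroup.mul_inv] at this
    exact le_trans (le_min le_rfl (hinv a)) this
  have hx := congrFun h x
  have hy := congrFun h y
  simp only [fuzzyCoset, AGGroup.mul_inv _] at hx hy
  -- hx : μ e = μ (mul x (inv y)), hy : μ (mul y (inv x)) = μ e
  have key : ∀ a b : G, μ (mul a (inv b)) = μ e → μ a ≥ μ b := by
    intro a b hab
    have hab' : mul (mul a (inv b)) b = a := by
      rw [AGGroup.left_invertive, AGGroup.mul_inv, AGGroup.left_id]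
    calc μ a = μ (mul (mul a (inv b)) b) := by rw [hab']
    _ ≥ min (μ (mul a (inv b))) (μ b) := hmul _ _
    _ = min (μ e) (μ b) := by rw [hab]
    _ = μ b := min_eq_right (he b)
  exact le_antisymm (key y x hy) (key x y hx.symm)
end

section
/- Let G be an AG-group and μ a normal fuzzy AG-subgroup of G, and let G/μ = {μ_x : x ∈ G} be the quotient AG-group of fuzzy cosets with operation μ_x ∘ μ_y = μ_{x·y}. Then the fuzzy subset ν of G/μ given by ν(μ_x) = μ(x) is well defined (if μ_x = μ_y then μ(x) = μ(y)) and is a normal fuzzy AG-subgroup of G/μ: ν(μ_x ∘ μ_y) ≥ min(ν(μ_x), ν(μ_y)), ν(μ_{x⁻¹}) ≥ ν(μ_x), and ν((μ_x ∘ μ_y) ∘ μ_{x⁻¹}) = ν(μ_y) for all x, y ∈ G. -/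
open AGGroup


section Aux
variable {G : Type*} [AGGroup G]

lemma mu_e_ge (μ : G → ℝ) (hμ : IsFuzzyAGSubgroup μ) (a : G) : μ AGGroup.e ≥ μ a := by
  have h1 := hμ.2.1 a (AGGroup.inv a)
  rw [AGGroup.mul_inv] at h1
  have h2 := hμ.2.2 a
  exact le_trans (le_min le_rfl h2) h1

lemma coset_eq_mu_eq (μ : G → ℝ) (hμ : IsNormalFuzzyAGSubgroup μ) {x y : G}
    (h : fuzzyCoset μ x = fuzzyCoset μ y) : μ x = μ y := by
  obtain ⟨hsub, _⟩ := hμ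
  have key : ∀ a b : G, μ (AGGroup.mul a (AGGroup.inv b)) = μ AGGroup.e → μ a ≥ μ b := by
    intro a b hab
    have hx : AGGroup.mul (AGGroup.mul a (AGGroup.inv b)) b = a := by
      rw [AGGroup.left_invertive, AGGroup.mul_inv, AGGroup.left_id]
    have hm := hsub.2.1 (AGGroup.mul a (AGGroup.inv b)) b
    rw [hx, hab] at hm
    exact le_trans (le_min (mu_e_ge μ hsub b) le_rfl) hm
  have hXY : μ (AGGroup.mul x (AGGroup.inv y)) = μ AGGroup.e := by
    have hc := congrFun h x
    simp only [fuzzyCoset] at hc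
    rw [AGGroup.mul_inv] at hc
    exact hc.symm
  have hYX : μ (AGGroup.mul y (AGGroup.inv x)) = μ AGGroup.e := by
    have hc := congrFun h y
    simp only [fuzzyCoset] at hc
    rw [AGGroup.mul_inv] at hc
    exact hc
  exact le_antisymm (key y x hYX) (key x y hXY)

lemma nu_spec (μ : G → ℝ) (hμ : IsNormalFuzzyAGSubgroup μ) (x : G) :
    μ (⟨x, rfl⟩ : ∃ z : G, fuzzyCoset μ x = fuzzyCoset μ z).choose = μ x :=
  coset_eq_mu_eq μ hμ (Exists.choose_spec (⟨x, rfl⟩ : ∃ z : G, fuzzyCoset μ x = fuzzyCoset μ z)).symm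

end Aux

/-- `ν(μ_x) = μ x` is a well-defined normal fuzzy AG-subgroup
of the quotient AG-group `G/μ` of fuzzy cosets. -/
theorem induced_normalFuzzy_on_quotient {G : Type*} [AGGroup G] (μ : G → ℝ)
    (hμ : IsNormalFuzzyAGSubgroup μ) :
    ∃ ν : {f : G → ℝ // ∃ x : G, f = fuzzyCoset μ x} → ℝ,
      (∀ x : G, ν ⟨fuzzyCoset μ x, ⟨x, rfl⟩⟩ = μ x) ∧
      (∀ x y : G, ν ⟨fuzzyCoset μ (mul x y), ⟨mul x y, rfl⟩⟩ ≥
        min (ν ⟨fuzzyCoset μ x, ⟨x, rfl⟩⟩) (ν ⟨fuzzyCoset μ y, ⟨y, rfl⟩⟩)) ∧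
      (∀ x : G, ν ⟨fuzzyCoset μ (inv x), ⟨inv x, rfl⟩⟩ ≥
        ν ⟨fuzzyCoset μ x, ⟨x, rfl⟩⟩) ∧
      (∀ x y : G,
        ν ⟨fuzzyCoset μ (mul (mul x y) (inv x)), ⟨mul (mul x y) (inv x), rfl⟩⟩ =
        ν ⟨fuzzyCoset μ y, ⟨y, rfl⟩⟩) := by
  refine ⟨fun f => μ f.2.choose, fun x => nu_spec μ hμ x, ?_, ?_, ?_⟩
  · intro x y
    dsimp only
    rw [nu_spec μ hμ, nu_spec μ hμ, nu_spec μ hμ]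
    exact hμ.1.2.1 x y
  · intro x
    dsimp only
    rw [nu_spec μ hμ, nu_spec μ hμ]
    exact hμ.1.2.2 x
  · intro x y
    dsimp only
    rw [nu_spec μ hμ, nu_spec μ hμ]
    exact hμ.2 x y
end

section
/- Let G be an AG-group with left identity e and μ a normal fuzzy AG-subgroup of G. Then the map θ : G → G/μ defined by θ(x) = μ_x is a homomorphism (θ(x·y) = θ(x) ∘ θ(y), where μ_x ∘ μ_y = μ_{x·y}), and its kernel equals μ*; that is, for all x ∈ G, μ_x = μ_e if and only if μ(x) = μ(e). -/
open AGGroup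

namespace AGGroupAux

open AGGroup

variable {G : Type*} [AGGroup G]

theorem inv_unique {a b : G} (h : mul b a = e) : inv a = b := by
  calc inv a = mul e (inv a) := (left_id _).symm
    _ = mul (mul b a) (inv a) := by rw [h]
    _ = mul (mul (inv a) a) b := left_invertive _ _ _
    _ = mul e b := by rw [inv_mul]
    _ = b := left_id _

theorem invol (a : G) : inv (inv a) = a := inv_unique (mul_inv a)

theorem medial (a b c d : G) :
    mul (mul a b) (mul c d) = mul (mul a c) (mul b d) := by
  calc mul (mul a b) (mul c d) = mul (mul (mul c d) b) a := left_invertive _ _ _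
    _ = mul (mul (mul b d) c) a := by rw [left_invertive c d b]
    _ = mul (mul a c) (mul b d) := left_invertive _ _ _

theorem comm_e (a b : G) : mul a b = mul (mul b a) e := by
  conv_lhs => rw [← left_id a]
  exact left_invertive e a b

theorem inv_mul_eq (a b : G) : inv (mul a b) = mul (inv a) (inv b) :=
  inv_unique (by rw [medial, inv_mul, inv_mul, left_id])

theorem inv_e : inv (e : G) = e := by
  have h1 := mul_inv (e : G)
  rwa [left_id] at h1

section Fuzzy

variable {μ : G → ℝ} (hμ : IsFuzzyAGSubgroup μ)

include hμ

theorem mu_inv (x : G) : μ (inv x) = μ x := by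
  refine le_antisymm ?_ (hμ.2.2 x)
  have := hμ.2.2 (inv x)
  rwa [invol] at this

theorem mu_le_e (x : G) : μ x ≤ μ e := by
  calc μ x = min (μ (inv x)) (μ x) := (min_eq_right (hμ.2.2 x)).symm
    _ ≤ μ (mul (inv x) x) := hμ.2.1 _ _
    _ = μ e := by rw [inv_mul]

theorem mu_comm (a b : G) : μ (mul a b) = μ (mul b a) := by
  have key : ∀ u v : G, μ (mul u v) ≤ μ (mul v u) := by
    intro u v
    calc μ (mul u v) = min (μ (mul u v)) (μ e) :=
          (min_eq_left (mu_le_e hμ _)).symm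
      _ ≤ μ (mul (mul u v) e) := hμ.2.1 _ _
      _ = μ (mul v u) := by rw [← comm_e]
  exact le_antisymm (key a b) (key b a)

theorem coset_mono {x z : G} (h : μ (mul x (inv z)) = μ e) (g : G) :
    μ (mul g (inv x)) ≤ μ (mul g (inv z)) := by
  have hgz : mul g (inv z) = mul (mul (inv z) x) (mul g (inv x)) := by
    calc mul g (inv z) = mul (mul (mul g (inv x)) x) (inv z) := by
          rw [left_invertive g (inv x) x, AGGroup.mul_inv, left_id]
      _ = mul (mul (inv z) x) (mul g (inv x)) := left_invertive _ _ _
  have hzx : μ (mul (inv z) x) = μ e := by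
    rw [mu_comm hμ (inv z) x]; exact h
  calc μ (mul g (inv x)) = min (μ (mul (inv z) x)) (μ (mul g (inv x))) := by
        rw [hzx]; exact (min_eq_right (mu_le_e hμ _)).symm
    _ ≤ μ (mul (mul (inv z) x) (mul g (inv x))) := hμ.2.1 _ _
    _ = μ (mul g (inv z)) := by rw [← hgz]

theorem coset_eq_iff (x z : G) :
    fuzzyCoset μ x = fuzzyCoset μ z ↔ μ (mul x (inv z)) = μ e := by
  constructor
  · intro h
    have := congrFun h x
    simp only [fuzzyCoset] at this
    rw [AGGroup.mul_inv] at this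
    rw [← this]
  · intro h
    have h' : μ (mul z (inv x)) = μ e := by
      rw [mu_comm hμ, ← mu_inv hμ, inv_mul_eq, invol]
      exact h
    funext g
    exact le_antisymm (coset_mono hμ h g) (coset_mono hμ h' g)

end Fuzzy

end AGGroupAux

/-- `θ x = μ_x` is a homomorphism from `G` onto the quotient
`G/μ` (with `μ_x ∘ μ_y = μ_{x·y}`) whose kernel is `μ*`:
`μ_x = μ_e ↔ μ x = μ e`. -/
theorem natural_hom_to_quotient {G : Type*} [AGGroup G] (μ : G → ℝ)
    (hμ : IsNormalFuzzyAGSubgroup μ) :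
    ∃ op : {f : G → ℝ // ∃ x : G, f = fuzzyCoset μ x} →
        {f : G → ℝ // ∃ x : G, f = fuzzyCoset μ x} →
        {f : G → ℝ // ∃ x : G, f = fuzzyCoset μ x},
      (∀ x y : G, op ⟨fuzzyCoset μ x, ⟨x, rfl⟩⟩ ⟨fuzzyCoset μ y, ⟨y, rfl⟩⟩ =
        ⟨fuzzyCoset μ (mul x y), ⟨mul x y, rfl⟩⟩) ∧
      (∀ x : G, fuzzyCoset μ x = fuzzyCoset μ (e : G) ↔ μ x = μ (e : G)) := by
  classical
  obtain ⟨hf, -⟩ := hμ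
  have key : ∀ x x' y y' : G, fuzzyCoset μ x = fuzzyCoset μ x' →
      fuzzyCoset μ y = fuzzyCoset μ y' →
      fuzzyCoset μ (mul x y) = fuzzyCoset μ (mul x' y') := by
    intro x x' y y' hx hy
    rw [AGGroupAux.coset_eq_iff hf] at hx hy ⊢
    rw [AGGroupAux.inv_mul_eq, AGGroupAux.medial]
    refine le_antisymm (AGGroupAux.mu_le_e hf _) ?_
    calc μ e = min (μ (mul x (inv x'))) (μ (mul y (inv y'))) := by
          rw [hx, hy, min_self]
      _ ≤ _ := hf.2.1 _ _
  refine ⟨fun f g => ⟨fuzzyCoset μ (mul (Classical.choose f.2) (Classical.choose g.2)),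
    _, rfl⟩, ?_, ?_⟩
  · intro x y
    apply Subtype.ext
    exact key _ x _ y (Classical.choose_spec
        (⟨x, rfl⟩ : ∃ x' : G, fuzzyCoset μ x = fuzzyCoset μ x')).symm
      (Classical.choose_spec
        (⟨y, rfl⟩ : ∃ y' : G, fuzzyCoset μ y = fuzzyCoset μ y')).symm
  · intro x
    rw [AGGroupAux.coset_eq_iff hf, AGGroupAux.inv_e, AGGroupAux.mu_comm hf, left_id]
end

section
/- Let G be an AG-group with left identity e, μ a fuzzy AG-subgroup of G, and x ∈ G. Then μ(x·y) = μ(y) for all y ∈ G if and only if μ(x) = μ(e). -/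
open AGGroup

/-- `μ (x·y) = μ y` for all `y` iff `μ x = μ e`. -/
theorem fuzzy_mul_eq_iff {G : Type*} [AGGroup G] (μ : G → ℝ)
    (hμ : IsFuzzyAGSubgroup μ) (x : G) :
    (∀ y : G, μ (mul x y) = μ y) ↔ μ x = μ (e : G) := by
  obtain ⟨_, hmul, hinv⟩ := hμ
  -- μ e is the maximum value
  have he : ∀ z : G, μ (e : G) ≥ μ z := by
    intro z
    have h1 : μ (mul z (inv z)) ≥ min (μ z) (μ (inv z)) := hmul z (inv z)
    rw [AGGroup.mul_inv] at h1
    exact le_trans (le_min le_rfl (hinv z)) h1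
  -- μ (z · e) = μ z
  have hze : ∀ z : G, μ (mul z (e : G)) = μ z := by
    intro z
    have hzee : mul (mul z (e : G)) (e : G) = z := by
      rw [left_invertive, left_id, left_id]
    have h1 : μ (mul z (e : G)) ≥ μ z :=
      le_trans (le_min le_rfl (he z)) (hmul z e)
    have h2 : μ z ≥ μ (mul z (e : G)) := by
      have := hmul (mul z (e : G)) (e : G)
      rw [hzee] at this
      exact le_trans (le_min le_rfl (he _)) this
    linarith [le_trans (le_min (le_refl (μ z)) (he z)) (hmul z e)]
  constructor
  · intro h
    have := h (e : G)
    rw [hze] at this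
    exact this
  · intro hx y
    have h1 : μ (mul x y) ≥ μ y := by
      have := hmul x y
      have hy : μ x ≥ μ y := hx ▸ he y
      exact le_trans (le_min hy le_rfl) this
    have h2 : μ y ≥ μ (mul x y) := by
      have hyx : mul y x = mul (mul x y) (e : G) := by
        rw [left_invertive, left_id]
      have hrec : mul (mul y x) (inv x) = y := by
        rw [left_invertive, inv_mul, left_id]
      have hμyx : μ (mul y x) = μ (mul x y) := by rw [hyx, hze]
      have hinvx : μ (inv x) ≥ μ (mul x y) :=
        le_trans (he (mul x y)) (hx ▸ hinv x)
      have := hmul (mul y x) (inv x)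
      rw [hrec, hμyx] at this
      exact le_trans (le_min le_rfl hinvx) this
    linarith
end

section
/- Let G be an AG-group. Then for all x, y ∈ G: (x·y)⁻¹ = x⁻¹·y⁻¹, where z⁻¹ denotes the inverse of z (the element with z⁻¹·z = z·z⁻¹ = e). -/
open AGGroup

lemma AG_medial {G : Type*} [AGGroup G] (a b c d : G) :
    mul (mul a b) (mul c d) = mul (mul a c) (mul b d) := by
  rw [left_invertive a b (mul c d), left_invertive c d b, left_invertive]

lemma AG_inv_unique {G : Type*} [AGGroup G] {a b : G} (h : mul b a = AGGroup.e) :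
    b = inv a := by
  calc b = mul AGGroup.e b := (left_id b).symm
    _ = mul (mul (inv a) a) b := by rw [inv_mul]
    _ = mul (mul b a) (inv a) := by rw [left_invertive]
    _ = inv a := by rw [h, left_id]

/-- in an AG-group, `(x·y)⁻¹ = x⁻¹·y⁻¹`. -/
theorem inv_mul_eq {G : Type*} [AGGroup G] (x y : G) :
    inv (mul x y) = mul (inv x) (inv y) := by
  symm
  apply AG_inv_unique
  rw [AG_medial, inv_mul, inv_mul, left_id]
end
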